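/- Let (λ_n)_{n∈ℕ} be a sequence of complex numbers with Im λ_n ≥ 0 for all n and ∑_{n} |λ_n| < ∞. Then for every z ∈ ℂ with Im z > 0 the infinite product B(z) := ∏_{n=1}^∞ (z − λ_n)/(z − conj(λ_n)) converges (the factors are multipliable), |B(z)| ≤ 1, and the function z ↦ B(z) is holomorphic on the open upper half-plane ℂ₊. -/

import Mathlib

/-!
On `ℂ₊` the point `z` is closer to `λ` than to `conj λ` when `Im λ ≥ 0`, so every factor has
modulus at most `1`; and a factor differs from `1` by `(conj λ - λ) / (z - conj λ)`, of modulus at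
most `2 |λ| / Im z`. On a compact subset of `ℂ₊` the imaginary part is bounded below, so
`∑ |λₙ| < ∞` makes the product converge uniformly there. Locally uniform limits of holomorphic
functions are holomorphic, and limits of products of numbers of modulus `≤ 1` have modulus `≤ 1`.
-/

open Filter Complex ComplexConjugate UpperHalfPlane

noncomputable def blaschkeFactor (a z : ℂ) : ℂ := (z - a) / (z - conj a)

lemma im_sub_conj (z a : ℂ) : (z - conj a).im = z.im + a.im := by
  simp

section BlaschkeFactor

variable {a z : ℂ}

lemma sub_conj_ne_zero (hz : 0 < z.im) (ha : 0 ≤ a.im) : z - conj a ≠ 0 := by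
  intro h
  have := im_sub_conj z a
  rw [h, zero_im] at this
  linarith

lemma norm_blaschkeFactor_le_one (hz : 0 < z.im) (ha : 0 ≤ a.im) : ‖blaschkeFactor a z‖ ≤ 1 := by
  have hsq : ‖z - a‖ ^ 2 + 4 * z.im * a.im = ‖z - conj a‖ ^ 2 := by
    simp only [← normSq_eq_norm_sq, normSq_apply, sub_re, sub_im, conj_re, conj_im]
    ring
  rw [blaschkeFactor, norm_div, div_le_one (norm_pos_iff.mpr (sub_conj_ne_zero hz ha)),
    ← sq_le_sq₀ (norm_nonneg _) (norm_nonneg _), ← hsq]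
  nlinarith [mul_nonneg hz.le ha]

lemma norm_blaschkeFactor_sub_one_le (ha : 0 ≤ a.im) {δ : ℝ} (hδ : 0 < δ) (hδz : δ ≤ z.im) :
    ‖blaschkeFactor a z - 1‖ ≤ 2 * ‖a‖ / δ := by
  have hne := sub_conj_ne_zero (hδ.trans_le hδz) ha
  have hnum : ‖conj a - a‖ ≤ 2 * ‖a‖ := by
    simpa [two_mul] using norm_sub_le (conj a) a
  have hden : δ ≤ ‖z - conj a‖ := by
    calc δ ≤ (z - conj a).im := by rw [im_sub_conj]; linarith
      _ ≤ ‖z - conj a‖ := (le_abs_self _).trans (abs_im_le_norm _)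
  rw [blaschkeFactor, div_sub_one hne, sub_sub_sub_cancel_left, norm_div]
  exact div_le_div₀ (by positivity) hnum hδ hden

lemma differentiableOn_blaschkeFactor (ha : 0 ≤ a.im) :
    DifferentiableOn ℂ (blaschkeFactor a) upperHalfPlaneSet :=
  DifferentiableOn.div (by fun_prop) (by fun_prop) fun _ hz ↦ sub_conj_ne_zero hz ha

end BlaschkeFactor

lemma HasProd.norm_le_one {ι E : Type*} [NormedCommRing E] [NormOneClass E] {f : ι → E} {x : E}
    (hf : HasProd f x) (h : ∀ i, ‖f i‖ ≤ 1) : ‖x‖ ≤ 1 :=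
  le_of_tendsto' (Tendsto.norm hf) fun s ↦
    (s.norm_prod_le f).trans (Finset.prod_le_one (fun _ _ ↦ norm_nonneg _) fun i _ ↦ h i)

lemma hasProdLocallyUniformlyOn_blaschkeFactor {ι : Type*} {lam : ι → ℂ} (him : ∀ n, 0 ≤ (lam n).im)
    (hsum : Summable fun n ↦ ‖lam n‖) :
    HasProdLocallyUniformlyOn (fun n ↦ blaschkeFactor (lam n))
      (fun z ↦ ∏' n, blaschkeFactor (lam n) z) upperHalfPlaneSet := by
  refine hasProdLocallyUniformlyOn_of_forall_compact isOpen_upperHalfPlaneSet fun K hKU hK ↦ ?_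
  obtain ⟨δ, hδ, hδK⟩ := hK.exists_forall_le' continuous_im.continuousOn fun z hz ↦ hKU hz
  have h := Summable.hasProdUniformlyOn_one_add hK ((hsum.mul_left 2).div_const δ)
    (.of_forall fun n z hz ↦ norm_blaschkeFactor_sub_one_le (him n) hδ (hδK z hz))
    fun n ↦ ((differentiableOn_blaschkeFactor (him n)).continuousOn.mono hKU).sub continuousOn_const
  simpa only [add_sub_cancel] using h

theorem blaschke_product_properties (lam : ℕ → ℂ) (him : ∀ n, 0 ≤ (lam n).im)
    (hsum : Summable fun n => ‖lam n‖) :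
    (∀ z : ℂ, 0 < z.im →
      Multipliable fun n => (z - lam n) / (z - starRingEnd ℂ (lam n))) ∧
    (∀ z : ℂ, 0 < z.im →
      ‖∏' n, (z - lam n) / (z - starRingEnd ℂ (lam n))‖ ≤ 1) ∧
    DifferentiableOn ℂ
      (fun z : ℂ => ∏' n, (z - lam n) / (z - starRingEnd ℂ (lam n)))
      {z : ℂ | 0 < z.im} := by
  have hB := hasProdLocallyUniformlyOn_blaschkeFactor him hsum
  refine ⟨fun z hz ↦ (hB.hasProd hz).multipliable,
    fun z hz ↦ (hB.hasProd hz).norm_le_one fun n ↦ norm_blaschkeFactor_le_one hz (him n), ?_⟩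
  refine hB.differentiableOn (.of_forall fun s ↦ ?_) isOpen_upperHalfPlaneSet
  simpa only [Finset.prod_fn] using
    DifferentiableOn.finsetProd fun n _ ↦ differentiableOn_blaschkeFactor (him n)
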